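/- arXiv:2512.08848 — 4 statements merged into one kernel-verified Lean document; each statement's English description precedes it below -/
import Mathlib

section
/- Let C be a unitary tensor category. If (M,τ) is a module over the central monad Z on Vect(C), then β^τ_X := (id_X ⊙ τ) ∘ ∂_{M,X} defines a half-braiding on M: β^τ_1 = id_M, β^τ satisfies the hexagon identity β^τ_{X⊙Y} = (id_X ⊙ β^τ_Y)(β^τ_X ⊙ id_Y), and each component β^τ_U for U ∈ C is invertible with inverse (R̄_U* ⊙ id_M ⊙ id_U)(β^τ_{Ū} ⊙ id_U)(id_U ⊙ id_M ⊙ R_U). -/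
/-!
STATEMENT 11: Let `C` be a unitary tensor category. If `(M,τ)` is a module over
the central monad `Z` on `Vect(C)`, then `β^τ_X := (id_X ⊙ τ) ∘ ∂_{M,X}` defines
a half-braiding on `M`:
* `β^τ_1 = id_M` (up to unitors),
* `β^τ` satisfies the hexagon identity
  `β^τ_{X⊙Y} = (id_X ⊙ β^τ_Y)(β^τ_X ⊙ id_Y)`, and
* each component `β^τ_U` for `U ∈ C` (i.e. dualizable `U`) is invertible with
  inverse `(R̄_U* ⊙ id_M ⊙ id_U)(β^τ_{Ū} ⊙ id_U)(id_U ⊙ id_M ⊙ R_U)`.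

`D` models `Vect(C)`; the monad is `adj.toMonad` for the free/forgetful
adjunction of the center, `∂_{M,X} = (η_M ▷ X) ≫ β^M_X`, and the duality data
for `U` is given by an exact pairing `(R, E)`.
-/

open CategoryTheory MonoidalCategory

universe u v

variable {D : Type u} [Category.{v} D] [MonoidalCategory D]

/-- Any half-braiding is the identity (up to unitors) at the monoidal unit. -/
theorem hb_unit (Z : D) (b : HalfBraiding Z) : (b.β (𝟙_ D)).hom = (ρ_ Z).hom ≫ (λ_ Z).inv := by
  have key := b.naturality (λ_ (𝟙_ D)).hom
  rw [b.monoidal] at key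
  simp only [MonoidalCategory.whiskerRight_id, id_whiskerLeft, Category.assoc] at key
  have h1 : Z ◁ (λ_ (𝟙_ D)).hom = (α_ Z (𝟙_ D) (𝟙_ D)).inv ≫ (ρ_ (Z ⊗ 𝟙_ D)).hom := by monoidal
  rw [h1, Category.assoc, cancel_epi, cancel_epi, ← Category.comp_id ((b.β (𝟙_ D)).hom),
    Category.assoc, cancel_epi, Category.comp_id] at key
  rw [← cancel_mono ((λ_ (𝟙_ D ⊗ Z)).inv ≫ (α_ (𝟙_ D) (𝟙_ D) Z).inv ≫ ((λ_ (𝟙_ D)).hom ▷ Z)),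
    ← cancel_epi ((ρ_ (𝟙_ D ⊗ Z)).inv ≫ (α_ (𝟙_ D) Z (𝟙_ D)).hom ≫ (λ_ (Z ⊗ 𝟙_ D)).hom)]
  have : (ρ_ (𝟙_ D ⊗ Z)).inv ≫ (α_ (𝟙_ D) Z (𝟙_ D)).hom ≫ (λ_ (Z ⊗ 𝟙_ D)).hom ≫
      (b.β (𝟙_ D)).hom ≫ (λ_ (𝟙_ D ⊗ Z)).inv ≫ (α_ (𝟙_ D) (𝟙_ D) Z).inv ≫
      ((λ_ (𝟙_ D)).hom ▷ Z) = 𝟙 _ := by simpa using key.symm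
  simp only [Category.assoc]
  rw [this]
  monoidal

/-- Invertibility of a component of a half-braiding-like family at a dualizable object. -/
theorem family_inv {Z : D} (β : ∀ U : D, Z ⊗ U ⟶ U ⊗ Z)
    (nat : ∀ {U V : D} (f : U ⟶ V), (Z ◁ f) ≫ β V = β U ≫ (f ▷ Z))
    (unit : β (𝟙_ D) = (ρ_ Z).hom ≫ (λ_ Z).inv)
    (hex : ∀ X Y : D, β (X ⊗ Y) =
      (α_ Z X Y).inv ≫ (β X ▷ Y) ≫ (α_ X Z Y).hom ≫ (X ◁ β Y) ≫ (α_ X Y Z).inv)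
    (U Ub : D) (R : 𝟙_ D ⟶ Ub ⊗ U) (E : U ⊗ Ub ⟶ 𝟙_ D)
    (h1 : (ρ_ U).inv ≫ (U ◁ R) ≫ (α_ U Ub U).inv ≫ (E ▷ U) ≫ (λ_ U).hom = 𝟙 U) :
    β U ≫ ((ρ_ (U ⊗ Z)).inv ≫ ((U ⊗ Z) ◁ R) ≫ (α_ (U ⊗ Z) Ub U).inv ≫
      ((α_ U Z Ub).hom ▷ U) ≫ ((U ◁ β Ub) ▷ U) ≫
      ((α_ U Ub Z).inv ▷ U) ≫ ((E ▷ Z) ▷ U) ≫ ((λ_ Z).hom ▷ U)) = 𝟙 (Z ⊗ U) ∧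
    ((ρ_ (U ⊗ Z)).inv ≫ ((U ⊗ Z) ◁ R) ≫ (α_ (U ⊗ Z) Ub U).inv ≫
      ((α_ U Z Ub).hom ▷ U) ≫ ((U ◁ β Ub) ▷ U) ≫
      ((α_ U Ub Z).inv ▷ U) ≫ ((E ▷ Z) ▷ U) ≫ ((λ_ Z).hom ▷ U)) ≫ β U = 𝟙 (U ⊗ Z) := by
  have e4 : (β U ▷ Ub) ≫ (α_ U Z Ub).hom ≫ (U ◁ β Ub) ≫ (α_ U Ub Z).inv
      = (α_ Z U Ub).hom ≫ β (U ⊗ Ub) := by rw [hex]; simp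
  have e5 : β (U ⊗ Ub) ≫ (E ▷ Z) = (Z ◁ E) ≫ (ρ_ Z).hom ≫ (λ_ Z).inv := by
    rw [← nat E, unit]
  have e7 : (Z ◁ R) ≫ β (Ub ⊗ U) = (ρ_ Z).hom ≫ (λ_ Z).inv ≫ (R ▷ Z) := by
    rw [nat R, unit]; simp
  constructor
  · have p : β U ≫ (ρ_ (U ⊗ Z)).inv ≫ ((U ⊗ Z) ◁ R) ≫ (α_ (U ⊗ Z) Ub U).inv =
        (ρ_ (Z ⊗ U)).inv ≫ ((Z ⊗ U) ◁ R) ≫ (α_ (Z ⊗ U) Ub U).inv ≫ ((β U ▷ Ub) ▷ U) := by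
      have h : β U ≫ (ρ_ (U ⊗ Z)).inv = (ρ_ (Z ⊗ U)).inv ≫ (β U ▷ 𝟙_ D) := by simp
      rw [reassoc_of% h, ← whisker_exchange_assoc]
      simp
    calc β U ≫ ((ρ_ (U ⊗ Z)).inv ≫ ((U ⊗ Z) ◁ R) ≫ (α_ (U ⊗ Z) Ub U).inv ≫
          ((α_ U Z Ub).hom ▷ U) ≫ ((U ◁ β Ub) ▷ U) ≫
          ((α_ U Ub Z).inv ▷ U) ≫ ((E ▷ Z) ▷ U) ≫ ((λ_ Z).hom ▷ U))
        = (ρ_ (Z ⊗ U)).inv ≫ ((Z ⊗ U) ◁ R) ≫ (α_ (Z ⊗ U) Ub U).inv ≫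
          (((β U ▷ Ub) ≫ (α_ U Z Ub).hom ≫ (U ◁ β Ub) ≫ (α_ U Ub Z).inv ≫
            (E ▷ Z) ≫ (λ_ Z).hom) ▷ U) := by
          simp only [comp_whiskerRight, Category.assoc]
          rw [reassoc_of% p]
      _ = (ρ_ (Z ⊗ U)).inv ≫ ((Z ⊗ U) ◁ R) ≫ (α_ (Z ⊗ U) Ub U).inv ≫
          (((α_ Z U Ub).hom ≫ (Z ◁ E) ≫ (ρ_ Z).hom) ▷ U) := by
          rw [reassoc_of% e4, reassoc_of% e5]; simp
      _ = Z ◁ ((ρ_ U).inv ≫ (U ◁ R) ≫ (α_ U Ub U).inv ≫ (E ▷ U) ≫ (λ_ U).hom) := by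
          monoidal
      _ = 𝟙 (Z ⊗ U) := by rw [h1]; simp
  · have q : ((E ▷ Z) ▷ U) ≫ ((λ_ Z).hom ▷ U) ≫ β U =
        (α_ (U ⊗ Ub) Z U).hom ≫ ((U ⊗ Ub) ◁ β U) ≫ (α_ (U ⊗ Ub) U Z).inv ≫
          ((E ▷ U) ▷ Z) ≫ ((λ_ U).hom ▷ Z) := by
      have h : ((λ_ Z).hom ▷ U) ≫ β U =
          (α_ (𝟙_ D) Z U).hom ≫ (𝟙_ D ◁ β U) ≫ ((λ_ (U ⊗ Z)).hom) := by simp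
      calc ((E ▷ Z) ▷ U) ≫ ((λ_ Z).hom ▷ U) ≫ β U
          = ((E ▷ Z) ▷ U) ≫ (α_ (𝟙_ D) Z U).hom ≫ (𝟙_ D ◁ β U) ≫ (λ_ (U ⊗ Z)).hom := by
            rw [h]
        _ = (α_ (U ⊗ Ub) Z U).hom ≫ (E ▷ (Z ⊗ U)) ≫ (𝟙_ D ◁ β U) ≫ (λ_ (U ⊗ Z)).hom := by
            monoidal
        _ = (α_ (U ⊗ Ub) Z U).hom ≫ ((U ⊗ Ub) ◁ β U) ≫ (E ▷ (U ⊗ Z)) ≫ (λ_ (U ⊗ Z)).hom := by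
            rw [← whisker_exchange_assoc]
        _ = (α_ (U ⊗ Ub) Z U).hom ≫ ((U ⊗ Ub) ◁ β U) ≫ (α_ (U ⊗ Ub) U Z).inv ≫
            ((E ▷ U) ▷ Z) ≫ ((λ_ U).hom ▷ Z) := by monoidal
    calc ((ρ_ (U ⊗ Z)).inv ≫ ((U ⊗ Z) ◁ R) ≫ (α_ (U ⊗ Z) Ub U).inv ≫
          ((α_ U Z Ub).hom ▷ U) ≫ ((U ◁ β Ub) ▷ U) ≫
          ((α_ U Ub Z).inv ▷ U) ≫ ((E ▷ Z) ▷ U) ≫ ((λ_ Z).hom ▷ U)) ≫ β U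
        = (ρ_ (U ⊗ Z)).inv ≫ ((U ⊗ Z) ◁ R) ≫ (α_ (U ⊗ Z) Ub U).inv ≫
          ((α_ U Z Ub).hom ▷ U) ≫ ((U ◁ β Ub) ▷ U) ≫ ((α_ U Ub Z).inv ▷ U) ≫
          (α_ (U ⊗ Ub) Z U).hom ≫ ((U ⊗ Ub) ◁ β U) ≫ (α_ (U ⊗ Ub) U Z).inv ≫
          ((E ▷ U) ▷ Z) ≫ ((λ_ U).hom ▷ Z) := by
          simp only [Category.assoc]; rw [q]
      _ = (ρ_ (U ⊗ Z)).inv ≫ ((U ⊗ Z) ◁ R) ≫ (α_ U Z (Ub ⊗ U)).hom ≫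
          (U ◁ β (Ub ⊗ U)) ≫ (α_ U (Ub ⊗ U) Z).inv ≫ ((α_ U Ub U).inv ▷ Z) ≫
          ((E ▷ U) ▷ Z) ≫ ((λ_ U).hom ▷ Z) := by
          rw [hex]; monoidal
      _ = (U ◁ (ρ_ Z).inv) ≫ (U ◁ (Z ◁ R)) ≫ (U ◁ β (Ub ⊗ U)) ≫
          (α_ U (Ub ⊗ U) Z).inv ≫ ((α_ U Ub U).inv ▷ Z) ≫
          ((E ▷ U) ▷ Z) ≫ ((λ_ U).hom ▷ Z) := by
          have h : (ρ_ (U ⊗ Z)).inv ≫ ((U ⊗ Z) ◁ R) ≫ (α_ U Z (Ub ⊗ U)).hom =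
              (U ◁ (ρ_ Z).inv) ≫ (U ◁ (Z ◁ R)) := by monoidal
          rw [reassoc_of% h]
      _ = ((ρ_ U).inv ≫ (U ◁ R) ≫ (α_ U Ub U).inv ≫ (E ▷ U) ≫ (λ_ U).hom) ▷ Z := by
          rw [← MonoidalCategory.whiskerLeft_comp_assoc U (Z ◁ R) (β (Ub ⊗ U)), e7]
          simp only [MonoidalCategory.whiskerLeft_comp, Category.assoc,
            MonoidalCategory.whiskerLeft_comp_assoc]
          monoidal
      _ = 𝟙 (U ⊗ Z) := by rw [h1]; simp

section gen
variable {Za Zt : D} (u : Za ⟶ Zt) (τ : Zt ⟶ Za) (b : HalfBraiding Zt)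

theorem gen_nat {U V : D} (f : U ⟶ V) :
    (Za ◁ f) ≫ ((u ▷ V) ≫ (b.β V).hom ≫ (V ◁ τ)) =
      ((u ▷ U) ≫ (b.β U).hom ≫ (U ◁ τ)) ≫ (f ▷ Za) := by
  rw [whisker_exchange_assoc, HalfBraiding.naturality_assoc]
  simp only [Category.assoc]
  rw [← whisker_exchange]

theorem gen_unit (hu : u ≫ τ = 𝟙 Za) :
    (u ▷ 𝟙_ D) ≫ (b.β (𝟙_ D)).hom ≫ (𝟙_ D ◁ τ) = (ρ_ Za).hom ≫ (λ_ Za).inv := by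
  rw [hb_unit]
  calc (u ▷ 𝟙_ D) ≫ ((ρ_ Zt).hom ≫ (λ_ Zt).inv) ≫ (𝟙_ D ◁ τ)
      = (ρ_ Za).hom ≫ (u ≫ τ) ≫ (λ_ Za).inv := by monoidal
    _ = (ρ_ Za).hom ≫ (λ_ Za).inv := by rw [hu]; simp

theorem gen_hex
    (he : ∀ Y : D, (b.β Y).hom ≫ (Y ◁ τ) = (τ ▷ Y) ≫ (u ▷ Y) ≫ (b.β Y).hom ≫ (Y ◁ τ))
    (X Y : D) :
    (u ▷ (X ⊗ Y)) ≫ (b.β (X ⊗ Y)).hom ≫ ((X ⊗ Y) ◁ τ) =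
      (α_ Za X Y).inv ≫ (((u ▷ X) ≫ (b.β X).hom ≫ (X ◁ τ)) ▷ Y) ≫ (α_ X Za Y).hom ≫
        (X ◁ ((u ▷ Y) ≫ (b.β Y).hom ≫ (Y ◁ τ))) ≫ (α_ X Y Za).inv := by
  rw [b.monoidal]
  calc (u ▷ (X ⊗ Y)) ≫ ((α_ Zt X Y).inv ≫ ((b.β X).hom ▷ Y) ≫ (α_ X Zt Y).hom ≫
        (X ◁ (b.β Y).hom) ≫ (α_ X Y Zt).inv) ≫ ((X ⊗ Y) ◁ τ)
      = (α_ Za X Y).inv ≫ (((u ▷ X) ≫ (b.β X).hom) ▷ Y) ≫ (α_ X Zt Y).hom ≫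
        (X ◁ ((b.β Y).hom ≫ (Y ◁ τ))) ≫ (α_ X Y Za).inv := by monoidal
    _ = (α_ Za X Y).inv ≫ (((u ▷ X) ≫ (b.β X).hom) ▷ Y) ≫ (α_ X Zt Y).hom ≫
        (X ◁ ((τ ▷ Y) ≫ (u ▷ Y) ≫ (b.β Y).hom ≫ (Y ◁ τ))) ≫ (α_ X Y Za).inv := by
        rw [← he]
    _ = (α_ Za X Y).inv ≫ (((u ▷ X) ≫ (b.β X).hom ≫ (X ◁ τ)) ▷ Y) ≫ (α_ X Za Y).hom ≫
        (X ◁ ((u ▷ Y) ≫ (b.β Y).hom ≫ (Y ◁ τ))) ≫ (α_ X Y Za).inv := by monoidal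

end gen

theorem btau_equiv (F : D ⥤ Center D) (adj : F ⊣ Center.forget D) (A : adj.toMonad.Algebra)
    (Y : D) :
    (A.a ▷ Y) ≫ (adj.unit.app A.A ▷ Y) ≫ (((F.obj A.A).2.β Y).hom) ≫ (Y ◁ A.a) =
      (((F.obj A.A).2.β Y).hom) ≫ (Y ◁ A.a) := by
  rw [← comp_whiskerRight_assoc]
  have hnat : A.a ≫ adj.unit.app A.A = adj.unit.app (adj.toMonad.obj A.A) ≫ (F.map A.a).f := by
    exact adj.unit.naturality A.a
  erw [hnat, comp_whiskerRight_assoc, (F.map A.a).comm_assoc Y]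
  have hassoc : (F.map A.a).f ≫ A.a = (adj.counit.app (F.obj A.A)).f ≫ A.a := by
    have h1 : (F.map A.a).f = adj.toMonad.map A.a := rfl
    have h2 : (adj.counit.app (F.obj A.A)).f = adj.toMonad.μ.app A.A := rfl
    rw [h1, h2]; exact A.assoc.symm
  erw [← MonoidalCategory.whiskerLeft_comp, hassoc, MonoidalCategory.whiskerLeft_comp]
  have hcomm := ((adj.counit.app (F.obj A.A)).comm_assoc Y (Y ◁ A.a)).symm
  simp only [Functor.comp_obj, Functor.id_obj] at hcomm
  simp only [Adjunction.toMonad_coe, Functor.comp_obj]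
  erw [hcomm, ← comp_whiskerRight_assoc]
  have htri : adj.unit.app (F.obj A.A).fst ≫
      (adj.counit.app (F.obj A.A)).f = 𝟙 ((F.obj A.A).fst) :=
    adj.right_triangle_components (F.obj A.A)
  erw [htri]
  erw [MonoidalCategory.id_whiskerRight, Category.id_comp]

/-- The candidate half-braiding `β^τ_X := (id_X ⊙ τ) ∘ ∂_{M,X}` associated to a
module `(M, τ)` over the central monad. -/
noncomputable def btau (F : D ⥤ Center D) (adj : F ⊣ Center.forget D)
    (A : adj.toMonad.Algebra) (X : D) : A.A ⊗ X ⟶ X ⊗ A.A :=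
  (adj.unit.app A.A ▷ X) ≫ ((F.obj A.A).2.β X).hom ≫ (X ◁ A.a)

theorem btau_is_halfBraiding
    (F : D ⥤ Center D) (adj : F ⊣ Center.forget D)
    (fact : ∀ (X K : D) (ξ : ∀ U : D, X ⊗ U ⟶ U ⊗ K),
      (∀ {U V : D} (f : U ⟶ V), (X ◁ f) ≫ ξ V = ξ U ≫ (f ▷ K)) →
      ∃! rr : (F.obj X).1 ⟶ K, ∀ U : D,
        ξ U = (adj.unit.app X ▷ U) ≫ ((F.obj X).2.β U).hom ≫ (U ◁ rr))
    (A : adj.toMonad.Algebra) :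
    -- unit component
    (btau F adj A (𝟙_ D) = (ρ_ A.A).hom ≫ (λ_ A.A).inv) ∧
    -- hexagon identity
    (∀ X Y : D, btau F adj A (X ⊗ Y) =
      (α_ A.A X Y).inv ≫ (btau F adj A X ▷ Y) ≫ (α_ X A.A Y).hom ≫
        (X ◁ btau F adj A Y) ≫ (α_ X Y A.A).inv) ∧
    -- invertibility of the components at dualizable objects, with the stated inverse
    (∀ (U Ub : D) (R : 𝟙_ D ⟶ Ub ⊗ U) (E : U ⊗ Ub ⟶ 𝟙_ D),
      ((ρ_ U).inv ≫ (U ◁ R) ≫ (α_ U Ub U).inv ≫ (E ▷ U) ≫ (λ_ U).hom = 𝟙 U) →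
      ((λ_ Ub).inv ≫ (R ▷ Ub) ≫ (α_ Ub U Ub).hom ≫ (Ub ◁ E) ≫ (ρ_ Ub).hom = 𝟙 Ub) →
      letI invU : U ⊗ A.A ⟶ A.A ⊗ U :=
        (ρ_ (U ⊗ A.A)).inv ≫ ((U ⊗ A.A) ◁ R) ≫ (α_ (U ⊗ A.A) Ub U).inv ≫
          ((α_ U A.A Ub).hom ▷ U) ≫ ((U ◁ btau F adj A Ub) ▷ U) ≫
          ((α_ U Ub A.A).inv ▷ U) ≫ ((E ▷ A.A) ▷ U) ≫ ((λ_ A.A).hom ▷ U)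
      btau F adj A U ≫ invU = 𝟙 (A.A ⊗ U) ∧ invU ≫ btau F adj A U = 𝟙 (U ⊗ A.A)) := by
  have hu : adj.unit.app A.A ≫ A.a = 𝟙 A.A := A.unit
  have hunit : btau F adj A (𝟙_ D) = (ρ_ A.A).hom ≫ (λ_ A.A).inv :=
    gen_unit (adj.unit.app A.A) A.a (F.obj A.A).2 hu
  have hnat : ∀ {U V : D} (f : U ⟶ V),
      (A.A ◁ f) ≫ btau F adj A V = btau F adj A U ≫ (f ▷ A.A) :=
    fun f => gen_nat (adj.unit.app A.A) A.a (F.obj A.A).2 f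
  have hhex : ∀ X Y : D, btau F adj A (X ⊗ Y) =
      (α_ A.A X Y).inv ≫ (btau F adj A X ▷ Y) ≫ (α_ X A.A Y).hom ≫
        (X ◁ btau F adj A Y) ≫ (α_ X Y A.A).inv :=
    fun X Y => gen_hex (adj.unit.app A.A) A.a (F.obj A.A).2
      (fun Y => (btau_equiv F adj A Y).symm) X Y
  refine ⟨hunit, hhex, ?_⟩
  intro U Ub R E h1 h2
  exact family_inv (btau F adj A) hnat hunit hhex U Ub R E h1
end

section
/- Let C be a unitary tensor category with central bimonad Z. Given Z-modules (M,τ) and (N,υ), the composite Z(M ⊙ N) →^{Z₂} Z(M) ⊙ Z(N) →^{τ⊙υ} M ⊙ N is a Z-module structure, and under the isomorphism Z-Mod ≅ Z Vect(C), the half-braiding associated to this module structure equals the tensor product half-braiding: (M ⊙ N, β^{(τ⊙υ)∘Z₂}) = (M,β^τ) ⊙ (N,β^υ). Consequently Z-Mod_{Vect(C)} ≅ Z Vect(C) is an isomorphism of tensor categories. -/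
/-!
STATEMENT 13: Let `C` be a unitary tensor category with central bimonad `Z`.
Given `Z`-modules `(M,τ)` and `(N,υ)`, the composite
`Z(M ⊙ N) →^{Z₂} Z(M) ⊙ Z(N) →^{τ⊙υ} M ⊙ N` is a `Z`-module structure, and
under the isomorphism `Z-Mod ≅ Z Vect(C)` the half-braiding associated to this
module structure equals the tensor product half-braiding:
`(M ⊙ N, β^{(τ⊙υ)∘Z₂}) = (M,β^τ) ⊙ (N,β^υ)`.  Consequently
`Z-Mod_{Vect(C)} ≅ Z Vect(C)` is an isomorphism of tensor categories.

`D` models `Vect(C)`; the central monad is `adj.toMonad` for the free/forgetful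
adjunction of the center, `∂_{X,U} = (η_X ▷ U) ≫ β^X_U`, and the bimonad
structure `(Z₂, Z₀)` is characterized via `∂` as in Statement 12; the bimonad
axioms appear among the hypotheses.
-/

open CategoryTheory MonoidalCategory

universe u v

variable {D : Type u} [Category.{v} D] [MonoidalCategory D]

/-- `∂_{X,U} : X ⊗ U ⟶ U ⊗ Z(X)`. -/
noncomputable def parZ (F : D ⥤ Center D) (adj : F ⊣ Center.forget D)
    (X U : D) : X ⊗ U ⟶ U ⊗ adj.toMonad.obj X :=
  (adj.unit.app X ▷ U) ≫ ((F.obj X).2.β U).hom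

/-- The half-braiding `β^τ` induced by a module `(M,τ)` over the central monad. -/
noncomputable def btauOf (F : D ⥤ Center D) (adj : F ⊣ Center.forget D)
    {M : D} (τ : adj.toMonad.obj M ⟶ M) (X : D) : M ⊗ X ⟶ X ⊗ M :=
  parZ F adj M X ≫ (X ◁ τ)

variable (F : D ⥤ Center D) (adj : F ⊣ Center.forget D)

lemma parZ_natural {U V : D} (X : D) (f : U ⟶ V) :
    (X ◁ f) ≫ parZ F adj X V = parZ F adj X U ≫ (f ▷ adj.toMonad.obj X) := by
  simp [parZ, whisker_exchange_assoc]
  erw [whisker_exchange_assoc, HalfBraiding.naturality, Category.assoc]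
  rfl

lemma parZ_dinatural {X Y : D} (f : X ⟶ Y) (U : D) :
    (f ▷ U) ≫ parZ F adj Y U = parZ F adj X U ≫ (U ◁ adj.toMonad.map f) := by
  have h1 : f ≫ adj.unit.app Y = adj.unit.app X ≫ adj.toMonad.map f := (adj.unit.naturality f)
  have h2 := (F.map f).comm U
  simp only [parZ, ← comp_whiskerRight_assoc, h1]
  erw [← comp_whiskerRight_assoc, h1, comp_whiskerRight_assoc]
  have : adj.toMonad.map f = (F.map f).f := rfl
  erw [this, h2]
  exact (Category.assoc _ _ _).symm

lemma parZ_mu (X U : D) :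
    parZ F adj (adj.toMonad.obj X) U ≫ (U ◁ adj.toMonad.μ.app X) = ((F.obj X).2.β U).hom := by
  have hμ : adj.toMonad.μ.app X = (adj.counit.app (F.obj X)).f := rfl
  have h2 := (adj.counit.app (F.obj X)).comm U
  erw [parZ, Category.assoc, hμ]
  have hobj : F.obj (adj.toMonad.obj X) = F.obj ((Center.forget D).obj (F.obj X)) := rfl
  erw [show ((F.obj (adj.toMonad.obj X)).2.β U).hom ≫ (U ◁ (adj.counit.app (F.obj X)).f)
      = ((adj.counit.app (F.obj X)).f ▷ U) ≫ ((F.obj X).2.β U).hom from (h2).symm]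
  erw [← comp_whiskerRight_assoc]
  have : adj.unit.app (adj.toMonad.obj X) ≫ (adj.counit.app (F.obj X)).f = 𝟙 _ :=
    adj.right_triangle_components (F.obj X)
  erw [this, MonoidalCategory.id_whiskerRight, Category.id_comp]

lemma btau_natural {M : D} (τ : adj.toMonad.obj M ⟶ M) {U V : D} (f : U ⟶ V) :
    (M ◁ f) ≫ btauOf F adj τ V = btauOf F adj τ U ≫ (f ▷ M) := by
  rw [btauOf, ← Category.assoc, parZ_natural]
  simp [btauOf, whisker_exchange]

/-- candidate inverse of `btauOf`. -/
noncomputable def btauInv {M : D} (τ : adj.toMonad.obj M ⟶ M) (U : D) : U ⊗ M ⟶ M ⊗ U :=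
  (U ◁ adj.unit.app M) ≫ ((F.obj M).2.β U).inv ≫ (τ ▷ U)

lemma tau_eta {M : D} (τ : adj.toMonad.obj M ⟶ M) :
    τ ≫ adj.unit.app M = adj.unit.app (adj.toMonad.obj M) ≫ adj.toMonad.map τ :=
  (adj.unit.naturality τ)

lemma Zmap_comm {X Y : D} (f : X ⟶ Y) (U : D) :
    (adj.toMonad.map f ▷ U) ≫ ((F.obj Y).2.β U).hom
      = ((F.obj X).2.β U).hom ≫ (U ◁ adj.toMonad.map f) := by
  exact (F.map f).comm U

lemma mu_comm (X U : D) :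
    (adj.toMonad.μ.app X ▷ U) ≫ ((F.obj X).2.β U).hom
      = ((F.obj (adj.toMonad.obj X)).2.β U).hom ≫ (U ◁ adj.toMonad.μ.app X) :=
  (adj.counit.app (F.obj X)).comm U

lemma btau_hom_inv {M : D} (τ : adj.toMonad.obj M ⟶ M)
    (hunit : adj.toMonad.η.app M ≫ τ = 𝟙 M)
    (hassoc : adj.toMonad.map τ ≫ τ = adj.toMonad.μ.app M ≫ τ) (U : D) :
    btauOf F adj τ U ≫ btauInv F adj τ U = 𝟙 (M ⊗ U) := by
  rw [btauOf, btauInv, parZ]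
  have key : ((F.obj M).2.β U).hom ≫ (U ◁ τ) ≫ (U ◁ adj.unit.app M) ≫
      ((F.obj M).2.β U).inv ≫ (τ ▷ U) = τ ▷ U := by
    erw [← MonoidalCategory.whiskerLeft_comp_assoc, tau_eta F adj τ,
      MonoidalCategory.whiskerLeft_comp_assoc]
    have h2 : (U ◁ adj.toMonad.map τ) ≫ ((F.obj M).2.β U).inv
        = ((F.obj (adj.toMonad.obj M)).2.β U).inv ≫ (adj.toMonad.map τ ▷ U) := by
      erw [Iso.comp_inv_eq, Category.assoc, Zmap_comm F adj τ U, Iso.inv_hom_id_assoc]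
      rfl
    erw [← Category.assoc (U ◁ adj.toMonad.map τ), h2, Category.assoc]
    erw [← comp_whiskerRight, hassoc, comp_whiskerRight]
    -- now: β M U ≫ (U ◁ η_{ZM}) ≫ β ZM U).inv ≫ (μ ▷ U) ≫ (τ ▷ U)
    have h4 : ((F.obj (adj.toMonad.obj M)).2.β U).inv ≫ (adj.toMonad.μ.app M ▷ U)
        = (U ◁ adj.toMonad.μ.app M) ≫ ((F.obj M).2.β U).inv := by
      erw [Iso.eq_comp_inv, Category.assoc, mu_comm F adj M U, Iso.inv_hom_id_assoc]
      rfl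
    erw [← Category.assoc (((F.obj (adj.toMonad.obj M)).2.β U).inv), h4, Category.assoc,
      ← MonoidalCategory.whiskerLeft_comp_assoc]
    have : adj.unit.app (adj.toMonad.obj M) ≫ adj.toMonad.μ.app M = 𝟙 _ :=
      adj.toMonad.left_unit M
    erw [this, MonoidalCategory.whiskerLeft_id, Category.id_comp, Iso.hom_inv_id_assoc]
  erw [Category.assoc, Category.assoc, key, ← comp_whiskerRight,
    show adj.unit.app M ≫ τ = 𝟙 M from hunit]
  exact MonoidalCategory.id_whiskerRight _ _

lemma btau_inv_hom {M : D} (τ : adj.toMonad.obj M ⟶ M)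
    (hunit : adj.toMonad.η.app M ≫ τ = 𝟙 M)
    (hassoc : adj.toMonad.map τ ≫ τ = adj.toMonad.μ.app M ≫ τ) (U : D) :
    btauInv F adj τ U ≫ btauOf F adj τ U = 𝟙 (U ⊗ M) := by
  rw [btauOf, btauInv, parZ]
  have pm := parZ_mu F adj M U
  erw [parZ] at pm
  erw [Category.assoc, Category.assoc, Category.assoc]
  have key : (τ ▷ U) ≫ (adj.unit.app M ▷ U) ≫ ((F.obj M).2.β U).hom ≫ (U ◁ τ)
      = ((F.obj M).2.β U).hom ≫ (U ◁ τ) := by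
    erw [← comp_whiskerRight_assoc, tau_eta F adj τ, comp_whiskerRight_assoc,
      ← Category.assoc (adj.toMonad.map τ ▷ U), Zmap_comm F adj τ U, Category.assoc,
      ← MonoidalCategory.whiskerLeft_comp, hassoc,
      MonoidalCategory.whiskerLeft_comp, ← Category.assoc, ← Category.assoc, pm]
    rfl
  erw [key, Iso.inv_hom_id_assoc, ← MonoidalCategory.whiskerLeft_comp,
    show adj.unit.app M ≫ τ = 𝟙 M from hunit]
  exact MonoidalCategory.whiskerLeft_id _ _

lemma tau_pull {M : D} (τ : adj.toMonad.obj M ⟶ M)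
    (hassoc : adj.toMonad.map τ ≫ τ = adj.toMonad.μ.app M ≫ τ) (V : D) :
    (τ ▷ V) ≫ btauOf F adj τ V = ((F.obj M).2.β V).hom ≫ (V ◁ τ) := by
  rw [btauOf, ← Category.assoc, parZ_dinatural, Category.assoc,
    ← MonoidalCategory.whiskerLeft_comp, hassoc, MonoidalCategory.whiskerLeft_comp,
    ← Category.assoc, parZ_mu F adj M V]
  rfl

lemma btau_monoidal' {M : D} (τ : adj.toMonad.obj M ⟶ M)
    (hassoc : adj.toMonad.map τ ≫ τ = adj.toMonad.μ.app M ≫ τ) (U V : D) :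
    btauOf F adj τ (U ⊗ V) =
      (α_ M U V).inv ≫ (btauOf F adj τ U ▷ V) ≫ (α_ U M V).hom ≫
        (U ◁ btauOf F adj τ V) ≫ (α_ U V M).inv := by
  conv_rhs =>
    erw [btauOf, parZ, comp_whiskerRight, comp_whiskerRight, Category.assoc,
      associator_naturality_middle_assoc,
      ← MonoidalCategory.whiskerLeft_comp_assoc, tau_pull F adj τ hassoc V,
      MonoidalCategory.whiskerLeft_comp_assoc]
  rw [btauOf, parZ, HalfBraiding.monoidal]
  simp only [Category.assoc]
  monoidal

lemma alg_assoc' (A : adj.toMonad.Algebra) :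
    adj.toMonad.map A.a ≫ A.a = adj.toMonad.μ.app A.A ≫ A.a := A.assoc.symm

/-- The half-braiding on the carrier of an algebra. -/
noncomputable def PsiHB (A : adj.toMonad.Algebra) : HalfBraiding A.A where
  β U := ⟨btauOf F adj A.a U, btauInv F adj A.a U,
    btau_hom_inv F adj A.a A.unit (alg_assoc' F adj A) U,
    btau_inv_hom F adj A.a A.unit (alg_assoc' F adj A) U⟩
  monoidal U V := btau_monoidal' F adj A.a (alg_assoc' F adj A) U V
  naturality f := btau_natural F adj A.a f

/-- The inverse of the comparison functor. -/
noncomputable def Psi : adj.toMonad.Algebra ⥤ Center D where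
  obj A := ⟨A.A, PsiHB F adj A⟩
  map {A B} h :=
    { f := h.f
      comm := fun U => by
        have : btauOf F adj A.a U ≫ (U ◁ h.f) = (h.f ▷ U) ≫ btauOf F adj B.a U := by
          rw [btauOf, Category.assoc, ← MonoidalCategory.whiskerLeft_comp, ← h.h,
            MonoidalCategory.whiskerLeft_comp, ← Category.assoc, ← parZ_dinatural,
            Category.assoc, ← btauOf]
        exact this.symm }
  map_id A := by apply CategoryTheory.Center.ext; rfl
  map_comp f g := by apply CategoryTheory.Center.ext; rfl

lemma center_eqToHom_f {c c' : Center D} (h : c = c') :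
    (eqToHom h).f = eqToHom (congrArg Sigma.fst h) := by subst h; rfl

lemma alg_eqToHom_f {T : Monad D} {A B : T.Algebra} (h : A = B) :
    (eqToHom h).f = eqToHom (congrArg Monad.Algebra.A h) := by subst h; rfl

lemma halfBraiding_ext {X : D} (b b' : HalfBraiding X)
    (h : ∀ U, (b.β U).hom = (b'.β U).hom) : b = b' := by
  obtain ⟨β₁, m₁, n₁⟩ := b
  obtain ⟨β₂, m₂, n₂⟩ := b'
  have hβ : β₁ = β₂ := funext fun U => Iso.ext (h U)
  subst hβ
  rfl

lemma btau_counit (c : Center D) (U : D) :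
    btauOf F adj ((adj.counit.app c).f) U = (c.2.β U).hom := by
  have h2 := (adj.counit.app c).comm U
  have tri : adj.unit.app ((Center.forget D).obj c) ≫ (adj.counit.app c).f = 𝟙 _ :=
    adj.right_triangle_components c
  show ((adj.unit.app ((Center.forget D).obj c) ▷ U) ≫
      (((Center.forget D ⋙ F).obj c).snd.β U).hom) ≫ (U ◁ (adj.counit.app c).f)
    = (((𝟭 (Center D)).obj c).snd.β U).hom
  erw [Category.assoc, ← h2, ← comp_whiskerRight_assoc, tri]
  erw [MonoidalCategory.id_whiskerRight, Category.id_comp]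

lemma comparison_Psi : Monad.comparison adj ⋙ Psi F adj = 𝟭 (Center D) := by
  apply CategoryTheory.Functor.ext
  case h_obj =>
    intro c
    show (⟨c.1, PsiHB F adj ((Monad.comparison adj).obj c)⟩ : Center D) = ⟨c.1, c.2⟩
    congr 1
    apply halfBraiding_ext
    intro U
    exact btau_counit F adj c U
  case h_map =>
    intro c c' f
    apply CategoryTheory.Center.ext
    simp [center_eqToHom_f]
    erw [eqToHom_refl, eqToHom_refl, Category.id_comp, Category.comp_id]
    rfl

section WithFact

variable (fact : ∀ (X K : D) (ξ : ∀ U : D, X ⊗ U ⟶ U ⊗ K),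
      (∀ {U V : D} (f : U ⟶ V), (X ◁ f) ≫ ξ V = ξ U ≫ (f ▷ K)) →
      ∃! rr : (F.obj X).1 ⟶ K, ∀ U : D,
        ξ U = parZ F adj X U ≫ (U ◁ rr))

include fact

lemma counit_Psi_f (A : adj.toMonad.Algebra) :
    (adj.counit.app ((Psi F adj).obj A)).f = A.a := by
  obtain ⟨rr, -, huniq⟩ := fact A.A A.A (fun U => btauOf F adj A.a U)
    (fun {U V} f => btau_natural F adj A.a f)
  have e1 : (adj.counit.app ((Psi F adj).obj A)).f = rr := by
    apply huniq
    intro U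
    exact (btau_counit F adj ((Psi F adj).obj A) U).symm
  have e2 : A.a = rr := huniq _ (fun U => rfl)
  rw [e1, e2]

lemma alg_mk_eq {T : Monad D} (X : D) (a a' : T.obj X ⟶ X) (h : a = a')
    (u1 : T.η.app X ≫ a = 𝟙 X) (a1 : T.μ.app X ≫ a = T.map a ≫ a)
    (u2 : T.η.app X ≫ a' = 𝟙 X) (a2 : T.μ.app X ≫ a' = T.map a' ≫ a') :
    Monad.Algebra.mk X a u1 a1 = Monad.Algebra.mk X a' u2 a2 := by
  subst h; rfl

lemma Psi_comparison : Psi F adj ⋙ Monad.comparison adj = 𝟭 adj.toMonad.Algebra := by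
  apply CategoryTheory.Functor.ext
  case h_obj =>
    intro A
    have h := counit_Psi_f F adj fact A
    obtain ⟨AA, aa, h1, h2⟩ := A
    exact alg_mk_eq F adj fact _ _ _ h _ _ _ _
  case h_map =>
    intro A B f
    apply Monad.Algebra.Hom.ext'
    simp [alg_eqToHom_f]
    erw [eqToHom_refl, eqToHom_refl, Category.id_comp, Category.comp_id]
    rfl

section Ztwo
variable (Z₂ : ∀ X Y : D, adj.toMonad.obj (X ⊗ Y) ⟶ adj.toMonad.obj X ⊗ adj.toMonad.obj Y)
    (charZ₂ : ∀ X Y U : D,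
      parZ F adj (X ⊗ Y) U ≫ (U ◁ Z₂ X Y) =
        (α_ X Y U).hom ≫ (X ◁ parZ F adj Y U) ≫ (α_ X U (adj.toMonad.obj Y)).inv ≫
          (parZ F adj X U ▷ adj.toMonad.obj Y) ≫
          (α_ U (adj.toMonad.obj X) (adj.toMonad.obj Y)).hom)

include charZ₂

lemma Ztwo_natural {X X' Y Y' : D} (f : X ⟶ X') (g : Y ⟶ Y') :
    adj.toMonad.map (f ⊗ₘ g) ≫ Z₂ X' Y' =
      Z₂ X Y ≫ (adj.toMonad.map f ⊗ₘ adj.toMonad.map g) := by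
  have hnat : ∀ {U V : D} (h : U ⟶ V),
      ((X ⊗ Y) ◁ h) ≫ (parZ F adj (X ⊗ Y) V ≫ (V ◁ (adj.toMonad.map (f ⊗ₘ g) ≫ Z₂ X' Y')))
        = (parZ F adj (X ⊗ Y) U ≫ (U ◁ (adj.toMonad.map (f ⊗ₘ g) ≫ Z₂ X' Y')))
            ≫ (h ▷ (adj.toMonad.obj X' ⊗ adj.toMonad.obj Y')) := by
    intro U V h
    rw [← Category.assoc, parZ_natural, Category.assoc, Category.assoc, ← whisker_exchange]
  obtain ⟨rr, -, huniq⟩ := fact (X ⊗ Y) (adj.toMonad.obj X' ⊗ adj.toMonad.obj Y')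
    (fun U => parZ F adj (X ⊗ Y) U ≫ (U ◁ (adj.toMonad.map (f ⊗ₘ g) ≫ Z₂ X' Y')))
    (fun {U V} h => hnat h)
  have e1 : adj.toMonad.map (f ⊗ₘ g) ≫ Z₂ X' Y' = rr := huniq _ (fun U => rfl)
  have e2 : Z₂ X Y ≫ (adj.toMonad.map f ⊗ₘ adj.toMonad.map g) = rr := by
    apply huniq
    intro U
    calc parZ F adj (X ⊗ Y) U ≫ (U ◁ (adj.toMonad.map (f ⊗ₘ g) ≫ Z₂ X' Y'))
        = ((f ⊗ₘ g) ▷ U) ≫ (parZ F adj (X' ⊗ Y') U ≫ (U ◁ Z₂ X' Y')) := by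
          rw [MonoidalCategory.whiskerLeft_comp, ← Category.assoc, ← parZ_dinatural,
            Category.assoc]
      _ = ((f ⊗ₘ g) ▷ U) ≫ ((α_ X' Y' U).hom ≫ (X' ◁ parZ F adj Y' U) ≫
            (α_ X' U (adj.toMonad.obj Y')).inv ≫
            (parZ F adj X' U ▷ adj.toMonad.obj Y') ≫
            (α_ U (adj.toMonad.obj X') (adj.toMonad.obj Y')).hom) := by rw [charZ₂]
      _ = ((α_ X Y U).hom ≫ (X ◁ parZ F adj Y U) ≫ (α_ X U (adj.toMonad.obj Y)).inv ≫
            (parZ F adj X U ▷ adj.toMonad.obj Y) ≫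
            (α_ U (adj.toMonad.obj X) (adj.toMonad.obj Y)).hom) ≫
            (U ◁ (adj.toMonad.map f ⊗ₘ adj.toMonad.map g)) := by
          rw [MonoidalCategory.tensorHom_def f g, comp_whiskerRight, Category.assoc]
          slice_lhs 2 3 => rw [associator_naturality_middle]
          slice_lhs 3 4 => rw [← MonoidalCategory.whiskerLeft_comp, parZ_dinatural,
            MonoidalCategory.whiskerLeft_comp]
          slice_lhs 4 5 => rw [associator_inv_naturality_right]
          slice_lhs 5 6 => rw [whisker_exchange]
          slice_lhs 6 7 => rw [associator_naturality_right]
          slice_lhs 1 2 => rw [associator_naturality_left]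
          slice_lhs 2 3 => rw [← whisker_exchange]
          slice_lhs 3 4 => rw [associator_inv_naturality_left]
          slice_lhs 4 5 => rw [← comp_whiskerRight, parZ_dinatural, comp_whiskerRight]
          slice_lhs 5 6 => rw [associator_naturality_middle]
          simp only [Category.assoc]
          rw [← MonoidalCategory.whiskerLeft_comp, ← MonoidalCategory.tensorHom_def]
      _ = parZ F adj (X ⊗ Y) U ≫ (U ◁ (Z₂ X Y ≫ (adj.toMonad.map f ⊗ₘ adj.toMonad.map g))) := by
          rw [← charZ₂, MonoidalCategory.whiskerLeft_comp, Category.assoc]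
  rw [e1, e2]

end Ztwo

end WithFact


theorem tensor_of_modules
    (F : D ⥤ Center D) (adj : F ⊣ Center.forget D)
    (fact : ∀ (X K : D) (ξ : ∀ U : D, X ⊗ U ⟶ U ⊗ K),
      (∀ {U V : D} (f : U ⟶ V), (X ◁ f) ≫ ξ V = ξ U ≫ (f ▷ K)) →
      ∃! rr : (F.obj X).1 ⟶ K, ∀ U : D,
        ξ U = parZ F adj X U ≫ (U ◁ rr))
    (Z₂ : ∀ X Y : D, adj.toMonad.obj (X ⊗ Y) ⟶ adj.toMonad.obj X ⊗ adj.toMonad.obj Y)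
    (charZ₂ : ∀ X Y U : D,
      parZ F adj (X ⊗ Y) U ≫ (U ◁ Z₂ X Y) =
        (α_ X Y U).hom ≫ (X ◁ parZ F adj Y U) ≫ (α_ X U (adj.toMonad.obj Y)).inv ≫
          (parZ F adj X U ▷ adj.toMonad.obj Y) ≫
          (α_ U (adj.toMonad.obj X) (adj.toMonad.obj Y)).hom)
    -- bimonad axioms (from Statement 12)
    (etaoplax : ∀ X Y : D, adj.toMonad.η.app (X ⊗ Y) ≫ Z₂ X Y =
        adj.toMonad.η.app X ⊗ₘ adj.toMonad.η.app Y)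
    (muoplax : ∀ X Y : D, adj.toMonad.μ.app (X ⊗ Y) ≫ Z₂ X Y =
        adj.toMonad.map (Z₂ X Y) ≫ Z₂ (adj.toMonad.obj X) (adj.toMonad.obj Y) ≫
          (adj.toMonad.μ.app X ⊗ₘ adj.toMonad.μ.app Y))
    (A B : adj.toMonad.Algebra) :
    -- the composite is a Z-module structure on A.A ⊗ B.A
    (adj.toMonad.η.app (A.A ⊗ B.A) ≫ (Z₂ A.A B.A ≫ (A.a ⊗ₘ B.a)) = 𝟙 (A.A ⊗ B.A)) ∧
    (adj.toMonad.μ.app (A.A ⊗ B.A) ≫ (Z₂ A.A B.A ≫ (A.a ⊗ₘ B.a)) =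
      adj.toMonad.map (Z₂ A.A B.A ≫ (A.a ⊗ₘ B.a)) ≫ (Z₂ A.A B.A ≫ (A.a ⊗ₘ B.a))) ∧
    -- its induced half-braiding is the tensor product of the half-braidings β^τ, β^υ
    (∀ X : D, btauOf F adj (Z₂ A.A B.A ≫ (A.a ⊗ₘ B.a)) X =
      (α_ A.A B.A X).hom ≫ (A.A ◁ btauOf F adj B.a X) ≫ (α_ A.A X B.A).inv ≫
        (btauOf F adj A.a X ▷ B.A) ≫ (α_ X A.A B.A).hom) ∧
    -- consequently Z-Mod ≅ Z Vect(C) as (tensor) categories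
    (∃ Ψ : adj.toMonad.Algebra ⥤ Center D,
      Monad.comparison adj ⋙ Ψ = 𝟭 (Center D) ∧
      Ψ ⋙ Monad.comparison adj = 𝟭 adj.toMonad.Algebra) := by
  refine ⟨?_, ?_, ?_, Psi F adj, comparison_Psi F adj, Psi_comparison F adj fact⟩
  · rw [← Category.assoc, etaoplax, tensorHom_comp_tensorHom, A.unit, B.unit]
    simp
  · rw [← Category.assoc, muoplax, Functor.map_comp, Category.assoc, Category.assoc,
      Category.assoc]
    congr 1
    rw [tensorHom_comp_tensorHom, A.assoc, B.assoc, ← tensorHom_comp_tensorHom, ← Category.assoc,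
      ← Ztwo_natural F adj fact Z₂ charZ₂ A.a B.a, Category.assoc]
  · intro X
    rw [btauOf, MonoidalCategory.whiskerLeft_comp, ← Category.assoc, charZ₂,
      tensorHom_def' A.a B.a, MonoidalCategory.whiskerLeft_comp]
    simp only [Category.assoc]
    slice_lhs 5 6 => rw [← associator_naturality_right]
    slice_lhs 4 5 => rw [← whisker_exchange]
    slice_lhs 3 4 => rw [← associator_inv_naturality_right]
    slice_lhs 2 3 => rw [← MonoidalCategory.whiskerLeft_comp, ← btauOf]
    slice_lhs 5 6 => rw [← associator_naturality_middle]
    slice_lhs 4 5 => rw [← comp_whiskerRight, ← btauOf]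
end

section
/- Let A be an algebra object in Vect(C) for a unitary tensor category C, and V ∈ Vect(C). There is a bijection between left A-module structures α : A ⊙ V → V and algebra object morphisms α̃ : A → L^l_V, where L^l_V(a) := Vect(C)(a ⊙ V, V), given by α̃(f) = α ∘ (f ⊙ id_V) for f ∈ A(a), and inversely by composing with the canonical left action of L^l_V on V. -/
/-!
STATEMENT 15: Let `A` be an algebra object in `Vect(C)` for a unitary tensor
category `C`, and `V ∈ Vect(C)`. There is a bijection between left `A`-module
structures `α : A ⊙ V → V` and algebra object morphisms `α̃ : A → L^l_V`, where
`L^l_V(a) = Vect(C)(a ⊙ V, V)` is the internal endomorphism algebra, given by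
`α̃(f) = α ∘ (f ⊙ id_V)`, and inversely by composing with the canonical left
action of `L^l_V` on `V`.

We work in a monoidal category `D` modelling `Vect(C)`; algebra objects are
`Mon_ D`.  The internal endomorphism algebra `L^l_V` is an algebra object
`EndV` equipped with its canonical action `u : EndV.X ⊗ V ⟶ V` satisfying the
internal-hom universal property: every `g : a ⊗ V ⟶ V` factors uniquely as
`g = (g' ▷ V) ≫ u`.  The bijection is then between module structures (with their
unit and associativity axioms) and morphisms of algebra objects `A ⟶ EndV`,
compatible with the actions.
-/

open CategoryTheory MonoidalCategory

universe u v

theorem module_structures_equiv_algebra_morphisms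
    {D : Type u} [Category.{v} D] [MonoidalCategory D]
    (A EndV : Mon D) (V : D) (u : EndV.X ⊗ V ⟶ V)
    -- `u` is the canonical action of the internal endomorphism algebra on `V`
    (u_one : (EndV.mon.one ▷ V) ≫ u = (λ_ V).hom)
    (u_mul : (EndV.mon.mul ▷ V) ≫ u = (α_ EndV.X EndV.X V).hom ≫ (EndV.X ◁ u) ≫ u)
    -- the universal property of the internal hom `L^l_V`
    (univ : ∀ (a : D) (g : a ⊗ V ⟶ V), ∃! g' : a ⟶ EndV.X, (g' ▷ V) ≫ u = g) :
    ∃ e : {α : A.X ⊗ V ⟶ V //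
        (A.mon.one ▷ V) ≫ α = (λ_ V).hom ∧
        (A.mon.mul ▷ V) ≫ α = (α_ A.X A.X V).hom ≫ (A.X ◁ α) ≫ α} ≃ (A ⟶ EndV),
      ∀ α, (((e α).hom) ▷ V) ≫ u = α.1 := by
  classical
  choose g hg hu using univ
  have aux : ∀ f : A.X ⟶ EndV.X,
      (((f ⊗ₘ f) ≫ EndV.mon.mul) ▷ V) ≫ u =
        (α_ A.X A.X V).hom ≫ (A.X ◁ ((f ▷ V) ≫ u)) ≫ (f ▷ V) ≫ u := by
    intro f
    rw [comp_whiskerRight, Category.assoc, u_mul, ← tensorHom_id,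
      associator_naturality_assoc, tensorHom_id, tensorHom_def',
      Category.assoc, ← whisker_exchange_assoc]
    simp only [MonoidalCategory.whiskerLeft_comp, Category.assoc]
  refine ⟨⟨fun α =>
      Mon.Hom.mk' (g A.X α.1) ?_ ?_,
      fun f => ⟨(f.hom ▷ V) ≫ u, ?_, ?_⟩, ?_, ?_⟩, ?_⟩
  · have h1 : A.mon.one ≫ g A.X α.1 = g (𝟙_ D) (λ_ V).hom := by
      refine hu _ _ _ ?_
      show ((A.mon.one ≫ g A.X α.1) ▷ V) ≫ u = (λ_ V).hom
      rw [comp_whiskerRight, Category.assoc, hg, α.2.1]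
    have h2 : EndV.mon.one = g (𝟙_ D) (λ_ V).hom := hu _ _ _ u_one
    rw [h1, ← h2]
  · have h1 : A.mon.mul ≫ g A.X α.1 = g (A.X ⊗ A.X) ((A.mon.mul ▷ V) ≫ α.1) := by
      refine hu _ _ _ ?_
      show ((A.mon.mul ≫ g A.X α.1) ▷ V) ≫ u = (A.mon.mul ▷ V) ≫ α.1
      rw [comp_whiskerRight, Category.assoc, hg]
    have h2 : (g A.X α.1 ⊗ₘ g A.X α.1) ≫ EndV.mon.mul
        = g (A.X ⊗ A.X) ((A.mon.mul ▷ V) ≫ α.1) := by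
      refine hu _ _ _ ?_
      show (((g A.X α.1 ⊗ₘ g A.X α.1) ≫ EndV.mon.mul) ▷ V) ≫ u = (A.mon.mul ▷ V) ≫ α.1
      rw [aux, hg, ← α.2.2]
    rw [h1, ← h2]
  · rw [← comp_whiskerRight_assoc, IsMonHom.one_hom f.hom, u_one]
  · rw [← comp_whiskerRight_assoc, IsMonHom.mul_hom f.hom, ← Category.assoc, aux]
    simp only [Category.assoc]
  · intro α
    exact Subtype.ext (hg _ _)
  · intro f
    refine Mon.Hom.ext ?_
    exact (hu _ _ _ rfl).symm
  · intro α
    exact hg _ _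
end

section
/- Let C be a unitary tensor category and H ∈ Hilb(C) carrying an algebraic half-braiding β on its underlying ind-object. If each component β_a : H ⊙ a → a ⊙ H (a ∈ Irr(C)) is bounded, then the corresponding algebra morphism α : S → L^r_{S_H} takes values in the bounded operator algebra B^r_{S_H}, with the norm estimate ‖α(ι_a)_{b⊠c}‖ ≤ d_a^{1/2} ‖β_a‖, where d_a is the quantum dimension of a and ι_a : ā ⊠ a → S is the canonical embedding. -/
/-!
STATEMENT 19: Let `C` be a unitary tensor category and `H ∈ Hilb(C)` carrying an
algebraic half-braiding `β` on its underlying ind-object. If each component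
`β_a : H ⊙ a → a ⊙ H` (`a ∈ Irr(C)`) is bounded, then the corresponding algebra
morphism `α : S → L^r_{S_H}` takes values in the bounded operator algebra
`B^r_{S_H}`, with the norm estimate `‖α(ι_a)_{b⊠c}‖ ≤ d_a^{1/2} ‖β_a‖`, where
`d_a` is the quantum dimension of `a` and `ι_a : ā ⊠ a → S` is the canonical
embedding.

We work in a category `D` modelling the algebraic ind-completion, equipped with
an extended (`ℝ≥0∞`-valued) operator norm `nrm`; morphisms of `Hilb(C)` are
exactly those of finite norm ("bounded").  The component of `α(ι_a)` at every
`b ⊠ c` is the fiber at `bc` of the morphism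
`g_a = (R̄_a^* ⊙ id_H) ∘ (id_ā ⊙ β_a) : ā ⊙ H ⊙ a ⟶ H`, so the claimed estimate
is `nrm (g_a) ≤ √(d a) * nrm (β a)`; in particular `g_a` is bounded.
-/

open CategoryTheory MonoidalCategory
open scoped ENNReal

universe u v

theorem halfBraiding_bounded_algebra_morphism
    {D : Type u} [Category.{v} D] [MonoidalCategory D]
    -- extended operator norm: finite norm = bounded (a morphism of Hilb(C))
    (nrm : ∀ {X Y : D}, (X ⟶ Y) → ℝ≥0∞)
    (nrm_comp : ∀ {X Y Z : D} (f : X ⟶ Y) (g : Y ⟶ Z), nrm (f ≫ g) ≤ nrm f * nrm g)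
    (nrm_whiskerLeft : ∀ {X Y : D} (W : D) (f : X ⟶ Y), nrm (W ◁ f) ≤ nrm f)
    (nrm_whiskerRight : ∀ {X Y : D} (f : X ⟶ Y) (W : D), nrm (f ▷ W) ≤ nrm f)
    (nrm_assoc : ∀ X Y Z : D, nrm ((α_ X Y Z).inv) ≤ 1)
    (nrm_lunitor : ∀ X : D, nrm ((λ_ X).hom) ≤ 1)
    -- irreducibles, conjugates and quantum dimensions
    (I : Type v) (r : I → D) (db : I → D) (d : I → ℝ) (hd : ∀ a, 0 < d a)
    -- the evaluation `R̄_a^* : ā ⊗ a ⟶ 1`, of norm `d_a^{1/2}`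
    (Ev : ∀ a : I, db a ⊗ r a ⟶ 𝟙_ D)
    (hEv : ∀ a : I, nrm (Ev a) = ENNReal.ofReal (Real.sqrt (d a)))
    -- the ind-object H and the components of an algebraic half-braiding on it
    (H : D) (β : ∀ a : I, H ⊗ r a ⟶ r a ⊗ H)
    -- boundedness of the half-braiding components
    (hβ : ∀ a : I, nrm (β a) < ⊤) :
    ∀ a : I,
      nrm ((db a ◁ β a) ≫ (α_ (db a) (r a) H).inv ≫ (Ev a ▷ H) ≫ (λ_ H).hom)
          ≤ ENNReal.ofReal (Real.sqrt (d a)) * nrm (β a) ∧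
      nrm ((db a ◁ β a) ≫ (α_ (db a) (r a) H).inv ≫ (Ev a ▷ H) ≫ (λ_ H).hom) < ⊤ := by
  intro a
  have key : nrm ((db a ◁ β a) ≫ (α_ (db a) (r a) H).inv ≫ (Ev a ▷ H) ≫ (λ_ H).hom)
      ≤ ENNReal.ofReal (Real.sqrt (d a)) * nrm (β a) := by
    calc nrm ((db a ◁ β a) ≫ (α_ (db a) (r a) H).inv ≫ (Ev a ▷ H) ≫ (λ_ H).hom)
        ≤ nrm (db a ◁ β a) * nrm ((α_ (db a) (r a) H).inv ≫ (Ev a ▷ H) ≫ (λ_ H).hom) :=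
          nrm_comp _ _
      _ ≤ nrm (β a) * (nrm ((α_ (db a) (r a) H).inv) * (nrm (Ev a ▷ H) * nrm ((λ_ H).hom))) := by
          gcongr
          · exact nrm_whiskerLeft _ _
          · exact (nrm_comp _ _).trans (by gcongr; exact nrm_comp _ _)
      _ ≤ nrm (β a) * (1 * (nrm (Ev a) * 1)) := by
          gcongr
          · exact nrm_assoc _ _ _
          · exact nrm_whiskerRight _ _
          · exact nrm_lunitor _
      _ = nrm (Ev a) * nrm (β a) := by ring
      _ = ENNReal.ofReal (Real.sqrt (d a)) * nrm (β a) := by rw [hEv]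
  refine ⟨key, lt_of_le_of_lt key ?_⟩
  exact ENNReal.mul_lt_top ENNReal.ofReal_lt_top (hβ a)
end
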